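/- For a word over a visibly pushdown alphabet (each symbol is a call, return, or internal symbol), the matching relation between call and return positions is unique: if ~₁ and ~₂ are both relations on positions satisfying (i) i ~ j implies i < j, (ii) for any call position i and return position j with i < j there exists l with i ≤ l ≤ j such that i ~ l or l ~ j, and (iii) each call position matches at most one return position and each return position matches at most one call position, then ~₁ = ~₂. -/
import Mathlib


inductive SymKind : Type
  | call | ret | intern
deriving DecidableEq

/-- Position `i` of word `w` carries a call symbol. -/
def CallPos {σ : Type*} (kind : σ → SymKind) (w : List σ) (i : ℕ) : Prop :=
  ∃ a, w[i]? = some a ∧ kind a = SymKind.call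

/-- Position `j` of word `w` carries a return symbol. -/
def RetPos {σ : Type*} (kind : σ → SymKind) (w : List σ) (j : ℕ) : Prop :=
  ∃ a, w[j]? = some a ∧ kind a = SymKind.ret

/-- `r` is a matching relation on the word `w` over the visibly pushdown
alphabet given by `kind`. -/
def IsMatchingRel {σ : Type*} (kind : σ → SymKind) (w : List σ)
    (r : ℕ → ℕ → Prop) : Prop :=
  -- `r` relates call positions to later return positions
  (∀ i j, r i j → CallPos kind w i ∧ RetPos kind w j ∧ i < j) ∧
  -- (ii) between any call `i` and later return `j` some intermediate `l`
  -- matches `i` or `j`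
  (∀ i j, CallPos kind w i → RetPos kind w j → i < j →
      ∃ l, i ≤ l ∧ l ≤ j ∧ (r i l ∨ r l j)) ∧
  -- (iii) each call matches at most one return and vice versa
  (∀ i j j', r i j → r i j' → j = j') ∧
  (∀ i i' j, r i j → r i' j → i = i')

theorem matching_aux {σ : Type*} (kind : σ → SymKind) (w : List σ)
    (r₁ r₂ : ℕ → ℕ → Prop)
    (h₁ : IsMatchingRel kind w r₁) (h₂ : IsMatchingRel kind w r₂) :
    ∀ n i j, j - i < n → r₁ i j → r₂ i j := by
  obtain ⟨h1a, h1b, h1c, h1d⟩ := h₁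
  obtain ⟨h2a, h2b, h2c, h2d⟩ := h₂
  intro n
  induction n with
  | zero =>
    intro i j hn hr
    obtain ⟨_, _, hij⟩ := h1a i j hr
    omega
  | succ n ih =>
    intro i j hn hr
    obtain ⟨hc, hret, hij⟩ := h1a i j hr
    obtain ⟨l, hil, hlj, hcase⟩ := h2b i j hc hret hij
    rcases hcase with h2il | h2lj
    · rcases eq_or_lt_of_le hlj with rfl | hlt
      · exact h2il
      · obtain ⟨_, hlret, hIl⟩ := h2a i l h2il
        obtain ⟨m, him, hml, hcase'⟩ := h1b i l hc hlret hIl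
        rcases hcase' with h1im | h1ml
        · have := h1c i j m hr h1im
          omega
        · obtain ⟨_, _, hmlt⟩ := h1a m l h1ml
          have h2ml : r₂ m l := ih m l (by omega) h1ml
          have hmi : m = i := h2d m i l h2ml h2il
          rw [hmi] at h1ml
          have : l = j := h1c i l j h1ml hr
          omega
    · rcases eq_or_lt_of_le hil with rfl | hlt
      · exact h2lj
      · obtain ⟨hlcall, _, hLj⟩ := h2a l j h2lj
        obtain ⟨m, hlm, hmj, hcase'⟩ := h1b l j hlcall hret hLj
        rcases hcase' with h1lm | h1mj
        · obtain ⟨_, _, hlmlt⟩ := h1a l m h1lm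
          have h2lm : r₂ l m := ih l m (by omega) h1lm
          have hmj' : m = j := h2c l m j h2lm h2lj
          rw [hmj'] at h1lm
          have : l = i := h1d l i j h1lm hr
          omega
        · have := h1d m i j h1mj hr
          omega

/-- The matching relation on a word over a visibly pushdown alphabet is unique. -/
theorem matching_relation_unique {σ : Type*} (kind : σ → SymKind) (w : List σ)
    (r₁ r₂ : ℕ → ℕ → Prop)
    (h₁ : IsMatchingRel kind w r₁) (h₂ : IsMatchingRel kind w r₂) :
    r₁ = r₂ := by
  funext i j
  apply propext
  constructor
  · exact matching_aux kind w r₁ r₂ h₁ h₂ (j - i + 1) i j (by omega)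
  · exact matching_aux kind w r₂ r₁ h₂ h₁ (j - i + 1) i j (by omega)
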